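/- Assume A = ln(S/K) + rT < 0 and set l = √(−2A). Then V₀ = S e^{rT} ( 1/2 + (1/√(2π)) ( ∫₀^∞ Q(σ̄₀ > σ₂(s)) e^{-s²/2} ds − ∫_{-∞}^0 Q(σ̄₀ < σ₂(s)) e^{-s²/2} ds ) ) − K ( Φ(−l) − (1/√(2π)) ∫_{-∞}^{-l} ( Q(σ̄₀ < σ₃(s)) + Q(σ̄₀ > σ₄(s)) ) e^{-s²/2} ds ). -/

import Mathlib

open MeasureTheory Real Set

noncomputable def stdNormalCDF (x : ℝ) : ℝ :=
  (Real.sqrt (2 * Real.pi))⁻¹ * ∫ u in Set.Iio x, Real.exp (-u ^ 2 / 2)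

/-!
Since `Φ(d) = 1/2 + (1/√(2π)) ∫₀^d e^{-s²/2} ds`, and `Φ(d) = Φ(b) - (1/√(2π)) ∫_d^b e^{-s²/2} ds`
for `d ≤ b`, Fubini turns `E[Φ(d₁)]` and `E[Φ(d₂)]` into Gaussian integrals of `Q(s < d₁)`,
`Q(d₁ < s)` and `Q(d₂ < s)`. For `σ̄₀ > 0` these events are quadratic inequalities in `σ̄₀`.
As `A < 0`, the smaller root `σ₁(s)` of the first one is negative, so `s < d₁ ↔ σ̄₀ > σ₂(s)`;
and `d₂ ≤ -√(-2A) = -l` by AM-GM, while for `s < -l`, `d₂ < s ↔ σ̄₀ ∉ [σ₃(s), σ₄(s)]`.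
-/

lemma exp_neg_one_half_mul_sq (x : ℝ) : exp (-(1 / 2) * x ^ 2) = exp (-x ^ 2 / 2) := by
  ring_nf

lemma integrable_exp_neg_sq_div_two : Integrable fun s : ℝ => exp (-s ^ 2 / 2) := by
  simpa only [exp_neg_one_half_mul_sq] using integrable_exp_neg_mul_sq (b := 1 / 2) (by norm_num)

lemma integral_Iio_zero_exp_neg_sq_div_two :
    ∫ s in Iio 0, exp (-s ^ 2 / 2) = √(2 * π) / 2 := by
  have h := integral_gaussian_Ioi (1 / 2)
  simp only [exp_neg_one_half_mul_sq] at h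
  rw [← integral_Iic_eq_integral_Iio, ← neg_zero, ← integral_comp_neg_Ioi]
  simp only [neg_sq, h]
  norm_num [div_eq_mul_inv, mul_comm]

lemma stdNormalCDF_zero : stdNormalCDF 0 = 1 / 2 := by
  rw [stdNormalCDF, integral_Iio_zero_exp_neg_sq_div_two]
  field_simp

lemma stdNormalCDF_sub_stdNormalCDF (a b : ℝ) :
    stdNormalCDF b - stdNormalCDF a = (√(2 * π))⁻¹ * ∫ s in a..b, exp (-s ^ 2 / 2) := by
  rw [stdNormalCDF, stdNormalCDF, ← mul_sub, ← integral_Iic_eq_integral_Iio,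
    ← integral_Iic_eq_integral_Iio, intervalIntegral.integral_Iic_sub_Iic
      integrable_exp_neg_sq_div_two.integrableOn integrable_exp_neg_sq_div_two.integrableOn]

section IndicatorIntegral

variable {E : Type*} [NormedAddCommGroup E] [NormedSpace ℝ E] (f : ℝ → E) (a b : ℝ)

lemma setIntegral_Ioi_indicator_Iio :
    ∫ s in Ioi a, (Iio b).indicator f s = ∫ s in Ioc a b, f s := by
  rw [integral_indicator measurableSet_Iio, Measure.restrict_restrict measurableSet_Iio,
    Iio_inter_Ioi, integral_Ioc_eq_integral_Ioo]

lemma setIntegral_Iio_indicator_Ioi :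
    ∫ s in Iio b, (Ioi a).indicator f s = ∫ s in Ioc a b, f s := by
  rw [integral_indicator measurableSet_Ioi, Measure.restrict_restrict measurableSet_Ioi,
    Ioi_inter_Iio, integral_Ioc_eq_integral_Ioo]

end IndicatorIntegral

lemma stdNormalCDF_eq_half_add (x : ℝ) :
    stdNormalCDF x = 1 / 2 + (√(2 * π))⁻¹ *
      ((∫ s in Ioi 0, (Iio x).indicator (fun s => exp (-s ^ 2 / 2)) s)
        - ∫ s in Iio 0, (Ioi x).indicator (fun s => exp (-s ^ 2 / 2)) s) := by
  have h := stdNormalCDF_sub_stdNormalCDF 0 x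
  rw [stdNormalCDF_zero, intervalIntegral] at h
  rw [setIntegral_Ioi_indicator_Iio, setIntegral_Iio_indicator_Ioi, ← h, add_sub_cancel]

lemma stdNormalCDF_eq_sub_of_le {x b : ℝ} (hxb : x ≤ b) :
    stdNormalCDF x = stdNormalCDF b - (√(2 * π))⁻¹ *
      ∫ s in Iio b, (Ioi x).indicator (fun s => exp (-s ^ 2 / 2)) s := by
  rw [setIntegral_Iio_indicator_Ioi, ← intervalIntegral.integral_of_le hxb,
    ← stdNormalCDF_sub_stdNormalCDF, sub_sub_cancel]

section Fubini

variable {Ω β : Type*} [MeasurableSpace Ω] [MeasurableSpace β] {Q : Measure Ω} [IsFiniteMeasure Q]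
  {ν : Measure β} {U : Ω → Set β} {g : β → ℝ}

lemma integrable_indicator_prod (hU : MeasurableSet {p : Ω × β | p.2 ∈ U p.1})
    (hg : Integrable g ν) :
    Integrable (Function.uncurry fun ω s => (U ω).indicator g s) (Q.prod ν) := by
  refine ((integrable_const (1 : ℝ)).mul_prod hg.norm).mono' ?_ (.of_forall fun p => ?_)
  · exact hg.aestronglyMeasurable.comp_snd.indicator hU
  · rw [one_mul]
    exact norm_indicator_le_norm_self g p.2

lemma integrable_integral_indicator [SFinite ν] (hU : MeasurableSet {p : Ω × β | p.2 ∈ U p.1})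
    (hg : Integrable g ν) : Integrable (fun ω => ∫ s, (U ω).indicator g s ∂ν) Q :=
  (integrable_indicator_prod hU hg).integral_prod_left

lemma integral_integral_indicator [SFinite ν] (hU : MeasurableSet {p : Ω × β | p.2 ∈ U p.1})
    (hg : Integrable g ν) :
    ∫ ω, ∫ s, (U ω).indicator g s ∂ν ∂Q = ∫ s, (Q {ω | s ∈ U ω}).toReal * g s ∂ν := by
  rw [integral_integral_swap (integrable_indicator_prod hU hg)]
  refine integral_congr_ae (.of_forall fun s => ?_)
  have hs : MeasurableSet {ω | s ∈ U ω} := measurable_prodMk_right hU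
  calc ∫ ω, (U ω).indicator g s ∂Q = ∫ ω, {ω | s ∈ U ω}.indicator (fun _ => g s) ω ∂Q := rfl
    _ = (Q {ω | s ∈ U ω}).toReal * g s := integral_indicator_const (g s) hs

end Fubini

section Expectation

variable {Ω : Type*} [MeasurableSpace Ω] {Q : Measure Ω} [IsProbabilityMeasure Q] {X : Ω → ℝ}

lemma integral_stdNormalCDF_comp (hX : Measurable X) :
    ∫ ω, stdNormalCDF (X ω) ∂Q = 1 / 2 + (√(2 * π))⁻¹ *
      ((∫ s in Ioi 0, (Q {ω | s < X ω}).toReal * exp (-s ^ 2 / 2))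
        - ∫ s in Iio 0, (Q {ω | X ω < s}).toReal * exp (-s ^ 2 / 2)) := by
  have hU₁ : MeasurableSet {p : Ω × ℝ | p.2 ∈ Iio (X p.1)} :=
    measurableSet_lt measurable_snd (hX.comp measurable_fst)
  have hU₂ : MeasurableSet {p : Ω × ℝ | p.2 ∈ Ioi (X p.1)} :=
    measurableSet_lt (hX.comp measurable_fst) measurable_snd
  have hg := integrable_exp_neg_sq_div_two
  have hF₁ := integrable_integral_indicator (Q := Q) (U := fun ω => Iio (X ω)) hU₁
    (hg.restrict (s := Ioi 0))
  have hF₂ := integrable_integral_indicator (Q := Q) (U := fun ω => Ioi (X ω)) hU₂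
    (hg.restrict (s := Iio 0))
  simp_rw [stdNormalCDF_eq_half_add]
  rw [integral_add (integrable_const _) ?_, integral_const_mul, integral_sub hF₁ hF₂,
    integral_integral_indicator (U := fun ω => Iio (X ω)) hU₁ hg.restrict,
    integral_integral_indicator (U := fun ω => Ioi (X ω)) hU₂ hg.restrict]
  · simp
  · exact (hF₁.sub hF₂).const_mul _

lemma integral_stdNormalCDF_comp_of_ae_le (hX : Measurable X) {b : ℝ} (hXb : ∀ᵐ ω ∂Q, X ω ≤ b) :
    ∫ ω, stdNormalCDF (X ω) ∂Q = stdNormalCDF b - (√(2 * π))⁻¹ *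
      ∫ s in Iio b, (Q {ω | X ω < s}).toReal * exp (-s ^ 2 / 2) := by
  have hU : MeasurableSet {p : Ω × ℝ | p.2 ∈ Ioi (X p.1)} :=
    measurableSet_lt (hX.comp measurable_fst) measurable_snd
  have hg := integrable_exp_neg_sq_div_two
  have hF := integrable_integral_indicator (Q := Q) (U := fun ω => Ioi (X ω)) hU
    (hg.restrict (s := Iio b))
  rw [integral_congr_ae (hXb.mono fun ω => stdNormalCDF_eq_sub_of_le),
    integral_sub (integrable_const _) (hF.const_mul _), integral_const_mul,
    integral_integral_indicator (U := fun ω => Ioi (X ω)) hU hg.restrict]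
  simp

end Expectation

section Quadratic

variable {a b c : ℝ}

lemma four_mul_quadratic_eq (x : ℝ) :
    4 * a * (a * (x * x) + b * x + c) = (2 * a * x + b) ^ 2 - discrim a b c := by
  rw [discrim]; ring

lemma quadratic_pos_iff (ha : 0 < a) (hd : 0 ≤ discrim a b c) (x : ℝ) :
    0 < a * (x * x) + b * x + c ↔
      x < (-b - √(discrim a b c)) / (2 * a) ∨ (-b + √(discrim a b c)) / (2 * a) < x := by
  have key := four_mul_quadratic_eq (a := a) (b := b) (c := c) x
  rw [← sq_sqrt hd] at key
  rw [← mul_pos_iff_of_pos_left (by positivity : 0 < 4 * a), key, sub_pos, sq_lt_sq,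
    abs_of_nonneg (sqrt_nonneg _), lt_abs, div_lt_iff₀ (by positivity),
    lt_div_iff₀ (by positivity)]
  constructor <;> rintro (h | h) <;> [right; left; right; left] <;> linarith

lemma quadratic_neg_iff (ha : 0 < a) (hd : 0 ≤ discrim a b c) (x : ℝ) :
    a * (x * x) + b * x + c < 0 ↔
      (-b - √(discrim a b c)) / (2 * a) < x ∧ x < (-b + √(discrim a b c)) / (2 * a) := by
  have key := four_mul_quadratic_eq (a := a) (b := b) (c := c) x
  rw [← sq_sqrt hd] at key
  rw [← smul_neg_iff_of_pos_left (by positivity : 0 < 4 * a), smul_eq_mul, key, sub_neg,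
    sq_lt_sq, abs_of_nonneg (sqrt_nonneg _), abs_lt, div_lt_iff₀ (by positivity),
    lt_div_iff₀ (by positivity)]
  constructor <;> rintro ⟨h₁, h₂⟩ <;> constructor <;> linarith

lemma quadratic_smaller_root_neg (ha : 0 < a) (hc : c < 0) :
    (-b - √(discrim a b c)) / (2 * a) < 0 := by
  have : -b < √(discrim a b c) := calc
    -b ≤ |b| := neg_le_abs b
    _ = √(b ^ 2) := (sqrt_sq_eq_abs b).symm
    _ < √(discrim a b c) := sqrt_lt_sqrt (sq_nonneg b) (by rw [discrim]; nlinarith)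
  exact div_neg_of_neg_of_pos (by linarith) (by positivity)

end Quadratic

/-- `d₁` and `d₂` as functions of the volatility `σ`, in terms of `A = ln(S/K) + rT`. -/
noncomputable def blackScholesD₁ (A T σ : ℝ) : ℝ := (A + σ ^ 2 * T / 2) / (σ * √T)

noncomputable def blackScholesD₂ (A T σ : ℝ) : ℝ := (A - σ ^ 2 * T / 2) / (σ * √T)

section BlackScholes

variable {A T σ : ℝ}

lemma blackScholesD₁_sub_mul_sqrt (hT : 0 < T) (hσ : 0 < σ) :
    blackScholesD₁ A T σ - σ * √T = blackScholesD₂ A T σ := by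
  unfold blackScholesD₁ blackScholesD₂
  field_simp
  rw [sq_sqrt hT.le]
  ring

lemma mul_sqrt_add_div_eq (hT : 0 < T) (x q : ℝ) :
    (x * √T + q) / (2 * (T / 2)) = x / √T + q / T := by
  have : 0 < √T := sqrt_pos.2 hT
  field_simp
  linear_combination x * sq_sqrt hT.le

lemma discrim_half_mul_sqrt (hT : 0 ≤ T) (s B : ℝ) :
    discrim (T / 2) (s * √T) B = s ^ 2 * T - 2 * T * B := by
  rw [discrim, mul_pow, sq_sqrt hT]; ring

lemma lt_blackScholesD₁_iff (hT : 0 < T) (hA : A < 0) (hσ : 0 < σ) (s : ℝ) :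
    s < blackScholesD₁ A T σ ↔ s / √T + √(s ^ 2 * T - 2 * T * A) / T < σ := by
  have hquad : s < blackScholesD₁ A T σ ↔ 0 < T / 2 * (σ * σ) + -s * √T * σ + A := by
    rw [blackScholesD₁, lt_div_iff₀ (by positivity)]
    constructor <;> intro h <;> linarith
  have hdisc := discrim_half_mul_sqrt hT.le (-s) A
  rw [neg_sq] at hdisc
  have hroot := quadratic_smaller_root_neg (b := -s * √T) (by positivity : 0 < T / 2) hA
  rw [hquad, quadratic_pos_iff (by positivity) (by rw [hdisc]; nlinarith [sq_nonneg s]) σ,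
    or_iff_right fun h => lt_asymm hσ (h.trans hroot), hdisc, neg_mul, neg_neg,
    mul_sqrt_add_div_eq hT]

lemma blackScholesD₁_lt_iff (hT : 0 < T) (hA : A < 0) (hσ : 0 < σ) (s : ℝ) :
    blackScholesD₁ A T σ < s ↔ σ < s / √T + √(s ^ 2 * T - 2 * T * A) / T := by
  have hquad : blackScholesD₁ A T σ < s ↔ T / 2 * (σ * σ) + -s * √T * σ + A < 0 := by
    rw [blackScholesD₁, div_lt_iff₀ (by positivity)]
    constructor <;> intro h <;> linarith
  have hdisc := discrim_half_mul_sqrt hT.le (-s) A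
  rw [neg_sq] at hdisc
  have hroot := quadratic_smaller_root_neg (b := -s * √T) (by positivity : 0 < T / 2) hA
  rw [hquad, quadratic_neg_iff (by positivity) (by rw [hdisc]; nlinarith [sq_nonneg s]) σ,
    and_iff_right (hroot.trans hσ), hdisc, neg_mul, neg_neg, mul_sqrt_add_div_eq hT]

lemma blackScholesD₂_le (hT : 0 < T) (hA : A ≤ 0) (hσ : 0 < σ) :
    blackScholesD₂ A T σ ≤ -√(-(2 * A)) := by
  have hl : √(-(2 * A)) ^ 2 = -(2 * A) := sq_sqrt (by linarith)
  have hsT : √T ^ 2 = T := sq_sqrt hT.le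
  rw [blackScholesD₂, div_le_iff₀ (by positivity)]
  nlinarith [sq_nonneg (σ * √T - √(-(2 * A)))]

lemma blackScholesD₂_lt_iff (hT : 0 < T) (hσ : 0 < σ) {s : ℝ} (hs : s < -√(-(2 * A))) :
    blackScholesD₂ A T σ < s ↔
      σ < -s / √T - √(s ^ 2 * T + 2 * T * A) / T ∨
        -s / √T + √(s ^ 2 * T + 2 * T * A) / T < σ := by
  have hquad : blackScholesD₂ A T σ < s ↔ 0 < T / 2 * (σ * σ) + s * √T * σ + -A := by
    rw [blackScholesD₂, div_lt_iff₀ (by positivity)]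
    constructor <;> intro h <;> linarith
  have hdisc : discrim (T / 2) (s * √T) (-A) = s ^ 2 * T + 2 * T * A := by
    rw [discrim_half_mul_sqrt hT.le]; ring
  have hs2 : -(2 * A) < s ^ 2 := by
    have hl : √(-(2 * A)) < -s := by linarith
    simpa only [neg_sq] using (sqrt_lt' (by linarith [sqrt_nonneg (-(2 * A))])).1 hl
  rw [hquad, quadratic_pos_iff (by positivity) (by rw [hdisc]; nlinarith) σ, hdisc, ← neg_mul,
    sub_eq_add_neg, mul_sqrt_add_div_eq hT, mul_sqrt_add_div_eq hT]
  simp only [neg_div, sub_eq_add_neg]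

variable {Ω : Type*} [MeasurableSpace Ω] {Q : Measure Ω} {σ₀ : Ω → ℝ}

lemma measure_lt_blackScholesD₁ (hpos : ∀ᵐ ω ∂Q, 0 < σ₀ ω) (hT : 0 < T) (hA : A < 0) (s : ℝ) :
    Q {ω | s < blackScholesD₁ A T (σ₀ ω)}
      = Q {ω | s / √T + √(s ^ 2 * T - 2 * T * A) / T < σ₀ ω} :=
  measure_congr <| Filter.eventuallyEq_set.2 <| hpos.mono fun _ hω =>
    lt_blackScholesD₁_iff hT hA hω s

lemma measure_blackScholesD₁_lt (hpos : ∀ᵐ ω ∂Q, 0 < σ₀ ω) (hT : 0 < T) (hA : A < 0) (s : ℝ) :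
    Q {ω | blackScholesD₁ A T (σ₀ ω) < s}
      = Q {ω | σ₀ ω < s / √T + √(s ^ 2 * T - 2 * T * A) / T} :=
  measure_congr <| Filter.eventuallyEq_set.2 <| hpos.mono fun _ hω =>
    blackScholesD₁_lt_iff hT hA hω s

lemma measure_blackScholesD₂_lt (hσ₀ : Measurable σ₀) (hpos : ∀ᵐ ω ∂Q, 0 < σ₀ ω) (hT : 0 < T)
    {s : ℝ} (hs : s < -√(-(2 * A))) :
    Q {ω | blackScholesD₂ A T (σ₀ ω) < s}
      = Q {ω | σ₀ ω < -s / √T - √(s ^ 2 * T + 2 * T * A) / T}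
        + Q {ω | -s / √T + √(s ^ 2 * T + 2 * T * A) / T < σ₀ ω} := by
  have hdisj : Disjoint {ω | σ₀ ω < -s / √T - √(s ^ 2 * T + 2 * T * A) / T}
      {ω | -s / √T + √(s ^ 2 * T + 2 * T * A) / T < σ₀ ω} := by
    refine Set.disjoint_left.2 fun ω h₁ h₂ => ?_
    have : 0 ≤ √(s ^ 2 * T + 2 * T * A) / T := by positivity
    simp only [mem_ofPred_eq] at h₁ h₂
    linarith
  rw [← measure_union hdisj (measurableSet_lt measurable_const hσ₀)]
  exact measure_congr <| Filter.eventuallyEq_set.2 <| hpos.mono fun _ hω =>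
    blackScholesD₂_lt_iff hT hω hs

end BlackScholes

theorem optionPrice_repr_neg_general
    {Ω : Type*} [MeasurableSpace Ω] (Q : Measure Ω) [IsProbabilityMeasure Q]
    (c : ℝ) (hc : 0 < c) (σ₀ : Ω → ℝ) (hσ₀ : Measurable σ₀)
    (hσ₀c : ∀ᵐ ω ∂Q, c ≤ σ₀ ω)
    (S K T r : ℝ) (hT : 0 < T)
    (A : ℝ) (hA : A = Real.log (S / K) + r * T) (hAneg : A < 0)
    (l : ℝ) (hl : l = Real.sqrt (-(2 * A)))
    (d₁ d₂ : Ω → ℝ)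
    (hd₁ : d₁ = fun ω =>
      (Real.log (S / K) + (r + σ₀ ω ^ 2 / 2) * T) / (σ₀ ω * Real.sqrt T))
    (hd₂ : d₂ = fun ω => d₁ ω - σ₀ ω * Real.sqrt T)
    (σ₂ σ₃ σ₄ : ℝ → ℝ)
    (hσ₂ : ∀ s, σ₂ s = s / Real.sqrt T + Real.sqrt (s ^ 2 * T - 2 * T * A) / T)
    (hσ₃ : ∀ s, σ₃ s = -s / Real.sqrt T - Real.sqrt (s ^ 2 * T + 2 * T * A) / T)
    (hσ₄ : ∀ s, σ₄ s = -s / Real.sqrt T + Real.sqrt (s ^ 2 * T + 2 * T * A) / T)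
    (V₀ : ℝ)
    (hV₀ : V₀ = S * Real.exp (r * T) * ∫ ω, stdNormalCDF (d₁ ω) ∂Q
      - K * ∫ ω, stdNormalCDF (d₂ ω) ∂Q) :
    V₀ = S * Real.exp (r * T)
          * (1 / 2
            + (Real.sqrt (2 * Real.pi))⁻¹
                * ((∫ s in Set.Ioi (0 : ℝ),
                      (Q {ω | σ₀ ω > σ₂ s}).toReal * Real.exp (-s ^ 2 / 2))
                  - ∫ s in Set.Iio (0 : ℝ),
                      (Q {ω | σ₀ ω < σ₂ s}).toReal * Real.exp (-s ^ 2 / 2)))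
        - K * (stdNormalCDF (-l)
            - (Real.sqrt (2 * Real.pi))⁻¹
                * ∫ s in Set.Iio (-l),
                    ((Q {ω | σ₀ ω < σ₃ s}).toReal + (Q {ω | σ₀ ω > σ₄ s}).toReal)
                      * Real.exp (-s ^ 2 / 2)) := by
  have hpos : ∀ᵐ ω ∂Q, 0 < σ₀ ω := hσ₀c.mono fun _ h => hc.trans_le h
  have hd₁A : d₁ = fun ω => blackScholesD₁ A T (σ₀ ω) := by
    rw [hd₁, hA]
    funext ω
    unfold blackScholesD₁
    congr 1
    ring
  have hd₂A : (fun ω => stdNormalCDF (d₂ ω)) =ᵐ[Q]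
      fun ω => stdNormalCDF (blackScholesD₂ A T (σ₀ ω)) := hpos.mono fun ω hω => by
    simp only [hd₂, hd₁A, blackScholesD₁_sub_mul_sqrt hT hω]
  have hd₂le : ∀ᵐ ω ∂Q, blackScholesD₂ A T (σ₀ ω) ≤ -l :=
    hpos.mono fun _ hω => hl ▸ blackScholesD₂_le hT hAneg.le hω
  rw [hV₀, integral_congr_ae hd₂A, hd₁A,
    integral_stdNormalCDF_comp (by unfold blackScholesD₁; fun_prop),
    integral_stdNormalCDF_comp_of_ae_le (by unfold blackScholesD₂; fun_prop) hd₂le,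
    setIntegral_congr_fun (s := Iio (-l)) measurableSet_Iio fun s hs =>
      by rw [measure_blackScholesD₂_lt hσ₀ hpos hT (hl ▸ hs),
        ENNReal.toReal_add (measure_ne_top _ _) (measure_ne_top _ _)]]
  simp only [measure_lt_blackScholesD₁ hpos hT hAneg, measure_blackScholesD₁_lt hpos hT hAneg,
    hσ₂, hσ₃, hσ₄, gt_iff_lt]

/-- If `A = ln(S/K) + rT < 0` and `l = √(−2A)`, then the option price
`V₀ = S e^{rT} E[Φ(d₁)] − K E[Φ(d₂)]` satisfies
`V₀ = S e^{rT} (1/2 + (1/√(2π)) (∫₀^∞ Q(σ̄₀ > σ₂(s)) e^{-s²/2} ds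
        − ∫_{-∞}^0 Q(σ̄₀ < σ₂(s)) e^{-s²/2} ds))
  − K (Φ(−l) − (1/√(2π)) ∫_{-∞}^{-l} (Q(σ̄₀ < σ₃(s)) + Q(σ̄₀ > σ₄(s))) e^{-s²/2} ds)`. -/
theorem optionPrice_repr_neg
    {Ω : Type*} [MeasurableSpace Ω] (Q : Measure Ω) [IsProbabilityMeasure Q]
    (c : ℝ) (hc : 0 < c) (σ₀ : Ω → ℝ) (hσ₀ : Measurable σ₀)
    (hσ₀c : ∀ᵐ ω ∂Q, c ≤ σ₀ ω)
    (S K T r : ℝ) (hS : 0 < S) (hK : 0 < K) (hT : 0 < T)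
    (A : ℝ) (hA : A = Real.log (S / K) + r * T) (hAneg : A < 0)
    (l : ℝ) (hl : l = Real.sqrt (-(2 * A)))
    (d₁ d₂ : Ω → ℝ)
    (hd₁ : d₁ = fun ω =>
      (Real.log (S / K) + (r + σ₀ ω ^ 2 / 2) * T) / (σ₀ ω * Real.sqrt T))
    (hd₂ : d₂ = fun ω => d₁ ω - σ₀ ω * Real.sqrt T)
    (σ₁ σ₂ σ₃ σ₄ : ℝ → ℝ)
    (hσ₁ : ∀ s, σ₁ s = s / Real.sqrt T - Real.sqrt (s ^ 2 * T - 2 * T * A) / T)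
    (hσ₂ : ∀ s, σ₂ s = s / Real.sqrt T + Real.sqrt (s ^ 2 * T - 2 * T * A) / T)
    (hσ₃ : ∀ s, σ₃ s = -s / Real.sqrt T - Real.sqrt (s ^ 2 * T + 2 * T * A) / T)
    (hσ₄ : ∀ s, σ₄ s = -s / Real.sqrt T + Real.sqrt (s ^ 2 * T + 2 * T * A) / T)
    (V₀ : ℝ)
    (hV₀ : V₀ = S * Real.exp (r * T) * ∫ ω, stdNormalCDF (d₁ ω) ∂Q
      - K * ∫ ω, stdNormalCDF (d₂ ω) ∂Q) :
    V₀ = S * Real.exp (r * T)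
          * (1 / 2
            + (Real.sqrt (2 * Real.pi))⁻¹
                * ((∫ s in Set.Ioi (0 : ℝ),
                      (Q {ω | σ₀ ω > σ₂ s}).toReal * Real.exp (-s ^ 2 / 2))
                  - ∫ s in Set.Iio (0 : ℝ),
                      (Q {ω | σ₀ ω < σ₂ s}).toReal * Real.exp (-s ^ 2 / 2)))
        - K * (stdNormalCDF (-l)
            - (Real.sqrt (2 * Real.pi))⁻¹
                * ∫ s in Set.Iio (-l),
                    ((Q {ω | σ₀ ω < σ₃ s}).toReal + (Q {ω | σ₀ ω > σ₄ s}).toReal)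
                      * Real.exp (-s ^ 2 / 2)) :=
  optionPrice_repr_neg_general Q c hc σ₀ hσ₀ hσ₀c S K T r hT A hA hAneg l hl d₁ d₂ hd₁ hd₂ σ₂ σ₃ σ₄
    hσ₂ hσ₃ hσ₄ V₀ hV₀
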